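/- arXiv:1506.02828 — 5 statements merged into one kernel-verified Lean document; each statement's English description precedes it below -/
import Mathlib

section
/- Let (Ω, A, P) be a probability space, (Ω₁, A₁) and (Ω₂, A₂) measurable spaces, and V₁ : Ω → Ω₁ and V₂, V₂', V₂'' : Ω → Ω₂ random variables such that the joint distributions of (V₁, V₂), (V₁, V₂'), and (V₁, V₂'') all coincide. Then for all measurable mappings Φ : Ω₁ × Ω₂ → ℝ and φ : Ω₁ → ℝ we have E[|Φ(V₁,V₂) − φ(V₁)|] ≥ (1/2) · E[|Φ(V₁,V₂') − Φ(V₁,V₂'')|]. -/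
open MeasureTheory ENNReal ProbabilityTheory

theorem lintegral_edist_le_two_mul_of_identDistrib
    {Ω E M : Type*} [MeasurableSpace Ω] [MeasurableSpace E] [PseudoEMetricSpace M]
    [MeasurableSpace M] [OpensMeasurableSpace M] [SecondCountableTopology M]
    {μ : Measure Ω} {X Y Z : Ω → E} (hY : IdentDistrib Y X μ μ) (hZ : IdentDistrib Z X μ μ)
    {f g : E → M} (hf : Measurable f) (hg : Measurable g) (hYZ : ∀ ω, g (Y ω) = g (Z ω)) :
    ∫⁻ ω, edist (f (Y ω)) (f (Z ω)) ∂μ ≤ 2 * ∫⁻ ω, edist (f (X ω)) (g (X ω)) ∂μ := by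
  have herr : Measurable fun e => edist (f e) (g e) := hf.edist hg
  calc ∫⁻ ω, edist (f (Y ω)) (f (Z ω)) ∂μ
      ≤ ∫⁻ ω, edist (f (Y ω)) (g (Y ω)) + edist (f (Z ω)) (g (Z ω)) ∂μ :=
        lintegral_mono fun ω => hYZ ω ▸ edist_triangle_right _ _ _
    _ = ∫⁻ ω, edist (f (Y ω)) (g (Y ω)) ∂μ + ∫⁻ ω, edist (f (Z ω)) (g (Z ω)) ∂μ :=
        lintegral_add_left' (herr.comp_aemeasurable hY.aemeasurable_fst) _
    _ = 2 * ∫⁻ ω, edist (f (X ω)) (g (X ω)) ∂μ := by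
        rw [two_mul]
        exact congr_arg₂ (· + ·) (hY.comp herr).lintegral_eq (hZ.comp herr).lintegral_eq

theorem stmt0_general
    {Ω Ω₁ Ω₂ : Type*} [MeasurableSpace Ω] [MeasurableSpace Ω₁] [MeasurableSpace Ω₂]
    (P : Measure Ω)
    (V₁ : Ω → Ω₁) (V₂ V₂' V₂'' : Ω → Ω₂)
    (hV₁ : Measurable V₁) (hV₂ : Measurable V₂) (hV₂' : Measurable V₂') (hV₂'' : Measurable V₂'')
    (h1 : P.map (fun ω => (V₁ ω, V₂ ω)) = P.map (fun ω => (V₁ ω, V₂' ω)))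
    (h2 : P.map (fun ω => (V₁ ω, V₂ ω)) = P.map (fun ω => (V₁ ω, V₂'' ω)))
    (Φ : Ω₁ × Ω₂ → ℝ) (φ : Ω₁ → ℝ)
    (hΦ : Measurable Φ) (hφ : Measurable φ) :
    (1 / 2 : ℝ≥0∞) * ∫⁻ ω, ENNReal.ofReal |Φ (V₁ ω, V₂' ω) - Φ (V₁ ω, V₂'' ω)| ∂P
      ≤ ∫⁻ ω, ENNReal.ofReal |Φ (V₁ ω, V₂ ω) - φ (V₁ ω)| ∂P := by
  have hX : AEMeasurable (fun ω => (V₁ ω, V₂ ω)) P := (hV₁.prodMk hV₂).aemeasurable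
  have hY : IdentDistrib (fun ω => (V₁ ω, V₂' ω)) (fun ω => (V₁ ω, V₂ ω)) P P :=
    ⟨(hV₁.prodMk hV₂').aemeasurable, hX, h1.symm⟩
  have hZ : IdentDistrib (fun ω => (V₁ ω, V₂'' ω)) (fun ω => (V₁ ω, V₂ ω)) P P :=
    ⟨(hV₁.prodMk hV₂'').aemeasurable, hX, h2.symm⟩
  have h_spread := lintegral_edist_le_two_mul_of_identDistrib hY hZ hΦ (hφ.comp measurable_fst)
    fun _ => rfl
  simp only [edist_dist, Real.dist_eq, Function.comp_apply] at h_spread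
  rw [one_div, ← ENNReal.div_eq_inv_mul]
  exact ENNReal.div_le_of_le_mul' h_spread

theorem stmt0
    {Ω Ω₁ Ω₂ : Type*} [MeasurableSpace Ω] [MeasurableSpace Ω₁] [MeasurableSpace Ω₂]
    (P : Measure Ω) [IsProbabilityMeasure P]
    (V₁ : Ω → Ω₁) (V₂ V₂' V₂'' : Ω → Ω₂)
    (hV₁ : Measurable V₁) (hV₂ : Measurable V₂) (hV₂' : Measurable V₂') (hV₂'' : Measurable V₂'')
    (h1 : P.map (fun ω => (V₁ ω, V₂ ω)) = P.map (fun ω => (V₁ ω, V₂' ω)))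
    (h2 : P.map (fun ω => (V₁ ω, V₂ ω)) = P.map (fun ω => (V₁ ω, V₂'' ω)))
    (Φ : Ω₁ × Ω₂ → ℝ) (φ : Ω₁ → ℝ)
    (hΦ : Measurable Φ) (hφ : Measurable φ) :
    (1 / 2 : ℝ≥0∞) * ∫⁻ ω, ENNReal.ofReal |Φ (V₁ ω, V₂' ω) - Φ (V₁ ω, V₂'' ω)| ∂P
      ≤ ∫⁻ ω, ENNReal.ofReal |Φ (V₁ ω, V₂ ω) - φ (V₁ ω)| ∂P :=
  stmt0_general P V₁ V₂ V₂' V₂'' hV₁ hV₂ hV₂' hV₂'' h1 h2 Φ φ hΦ hφ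
end

section
/- Let τ ∈ [1, ∞) and let Y be a real random variable with distribution N(0, τ²). Then E[|sin(Y)|] ≥ (1/√(8π)) · exp(−π²/8). -/
open MeasureTheory ProbabilityTheory Real
open scoped NNReal

/-!
Since `|sin x| ≥ sin x ^ 2 = (1 - cos (2 x)) / 2` and `E[cos (2 Y)] = Re φ_Y(2) = exp (-2 τ²)`,
we get `E|sin Y| ≥ (1 - exp (-2)) / 2 > 1 / 4`, while the claimed constant is below `1 / 4`
because `√(8π) > 4`.
-/

lemma integral_cos_mul_eq_re_charFun (μ : Measure ℝ) [IsFiniteMeasure μ] (t : ℝ) :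
    ∫ x, cos (t * x) ∂μ = (charFun μ t).re := by
  have hint : Integrable (fun x : ℝ ↦ Complex.exp (t * x * Complex.I)) μ :=
    (integrable_const (1 : ℝ)).mono' (by fun_prop)
      (.of_forall fun x ↦ by simp [← Complex.ofReal_mul, Complex.norm_exp_ofReal_mul_I])
  rw [charFun_apply_real, ← RCLike.re_to_complex, ← integral_re hint]
  simp [← Complex.ofReal_mul, Complex.exp_ofReal_mul_I_re]

lemma integral_cos_mul_gaussianReal (v : ℝ≥0) (t : ℝ) :
    ∫ x, cos (t * x) ∂gaussianReal 0 v = exp (-(v * t ^ 2 / 2)) := by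
  rw [integral_cos_mul_eq_re_charFun, charFun_gaussianReal, Complex.exp_re]
  simp [← Complex.ofReal_pow]

lemma integral_sin_sq_eq_charFun (μ : Measure ℝ) [IsProbabilityMeasure μ] :
    ∫ x, sin x ^ 2 ∂μ = (1 - (charFun μ 2).re) / 2 := by
  have hint : Integrable (fun x : ℝ ↦ cos (2 * x)) μ :=
    (integrable_const (1 : ℝ)).mono' (by fun_prop) (.of_forall fun x ↦ abs_cos_le_one _)
  simp_rw [sin_sq_eq_half_sub]
  rw [integral_sub (integrable_const _) (hint.div_const 2), integral_const, integral_div,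
    integral_cos_mul_eq_re_charFun]
  simp only [probReal_univ, one_div, smul_eq_mul, one_mul]
  ring

lemma integral_sin_sq_gaussianReal (v : ℝ≥0) :
    ∫ x, sin x ^ 2 ∂gaussianReal 0 v = (1 - exp (-(2 * v))) / 2 := by
  rw [integral_sin_sq_eq_charFun, ← integral_cos_mul_eq_re_charFun,
    integral_cos_mul_gaussianReal]
  ring_nf

lemma integral_sin_sq_le_integral_abs_sin (μ : Measure ℝ) [IsFiniteMeasure μ] :
    ∫ x, sin x ^ 2 ∂μ ≤ ∫ x, |sin x| ∂μ := by
  have hsq : Integrable (fun x ↦ sin x ^ 2) μ :=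
    (integrable_const (1 : ℝ)).mono' (by fun_prop)
      (.of_forall fun x ↦ by simpa using sin_sq_le_one x)
  have habs : Integrable (fun x ↦ |sin x|) μ :=
    (integrable_const (1 : ℝ)).mono' (by fun_prop) (.of_forall fun x ↦ by simp [abs_sin_le_one])
  refine integral_mono hsq habs fun x ↦ ?_
  rw [← sq_abs]
  nlinarith [abs_sin_le_one x, abs_nonneg (sin x)]

lemma one_div_sqrt_eight_pi_mul_exp_le :
    1 / √(8 * π) * exp (-(π ^ 2) / 8) ≤ 1 / 4 := by
  have hexp : exp (-(π ^ 2) / 8) ≤ 1 := exp_le_one_iff.mpr (by nlinarith [pi_pos])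
  have hsqrt : 4 ≤ √(8 * π) := le_sqrt_of_sq_le (by nlinarith [pi_gt_three])
  calc 1 / √(8 * π) * exp (-(π ^ 2) / 8) ≤ 1 / √(8 * π) * 1 := by gcongr
    _ ≤ 1 / 4 := by rw [mul_one]; gcongr

theorem stmt1_general
    {Ω : Type*} [MeasurableSpace Ω] (P : Measure Ω)
    (τ : ℝ) (hτ : 1 ≤ τ) (Y : Ω → ℝ) (hY : Measurable Y)
    (hlaw : P.map Y = gaussianReal 0 ⟨τ ^ 2, sq_nonneg τ⟩) :
    (1 / Real.sqrt (8 * π)) * Real.exp (-(π ^ 2) / 8) ≤ ∫ ω, |Real.sin (Y ω)| ∂P := by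
  set v : ℝ≥0 := ⟨τ ^ 2, sq_nonneg τ⟩
  have hv : 1 ≤ (v : ℝ) := one_le_pow₀ hτ
  have hexp : exp (-(2 * v : ℝ)) ≤ exp (-1) := exp_le_exp.mpr (by linarith)
  calc 1 / √(8 * π) * exp (-(π ^ 2) / 8) ≤ 1 / 4 := one_div_sqrt_eight_pi_mul_exp_le
    _ ≤ (1 - exp (-(2 * v))) / 2 := by linarith [exp_neg_one_lt_half]
    _ = ∫ x, sin x ^ 2 ∂gaussianReal 0 v := (integral_sin_sq_gaussianReal v).symm
    _ ≤ ∫ x, |sin x| ∂gaussianReal 0 v := integral_sin_sq_le_integral_abs_sin _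
    _ = ∫ ω, |sin (Y ω)| ∂P := by rw [← hlaw, integral_map hY.aemeasurable (by fun_prop)]

theorem stmt1
    {Ω : Type*} [MeasurableSpace Ω] (P : Measure Ω) [IsProbabilityMeasure P]
    (τ : ℝ) (hτ : 1 ≤ τ) (Y : Ω → ℝ) (hY : Measurable Y)
    (hlaw : P.map Y = gaussianReal 0 ⟨τ ^ 2, sq_nonneg τ⟩) :
    (1 / Real.sqrt (8 * π)) * Real.exp (-(π ^ 2) / 8) ≤ ∫ ω, |Real.sin (Y ω)| ∂P :=
  stmt1_general P τ hτ Y hY hlaw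
end

section
/- There exist a non-decreasing function φ₁ : ℝ → [0, ∞) and a non-increasing function φ₂ : ℝ → [0, ∞) such that liminf_{ℕ ∋ n → ∞} [φ₁(n) · φ₂(n)] = ∞ while liminf_{ℝ ∋ x → ∞} [φ₁(x) · φ₂(x)] = 0 (in fact also liminf_{ℕ ∋ n → ∞} [φ₁(n) · φ₂(n+1)] = 0). -/
/-!
Take step functions `φ₁ x = exp (a ⌊x⌋₊)` and `φ₂ x = exp (-b ⌈x⌉₊)` with `a`, `b` increasing.
At an integer `n` both read index `n`, so `φ₁ n * φ₂ n = exp (a n - b n)`; on `(n, n + 1)`, and at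
the shifted point `n + 1` for `φ₂`, the ceiling has already moved on, giving `exp (a n - b (n + 1))`.
With `a n = n ^ 2` and `b n = n ^ 2 - n` these are `exp n` and `exp (-n)`.
-/

open Filter Topology

theorem Filter.liminf_eq_zero_of_nonneg_of_tendsto_comp {ι α : Type*} {l : Filter ι} [l.NeBot]
    {g : Filter α} {f : α → ℝ} (hf : ∀ x, 0 ≤ f x) {u : ι → α} (hu : Tendsto u l g)
    (hfu : Tendsto (f ∘ u) l (𝓝 0)) : liminf f g = 0 := by
  have hcobdd : IsCoboundedUnder (· ≥ ·) g f :=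
    IsCoboundedUnder.of_frequently_le (a := 1)
      (hu.frequently (hfu.eventually (ge_mem_nhds one_pos)).frequently)
  refine le_antisymm ?_ (le_liminf_of_le hcobdd (.of_forall hf))
  calc liminf f g ≤ liminf (f ∘ u) l :=
        hu.liminf_le_liminf_comp hfu.isCoboundedUnder_ge
          (isBoundedUnder_of_eventually_ge (.of_forall hf))
    _ = 0 := hfu.liminf_eq

theorem Nat.floor_natCast_add_half (n : ℕ) : ⌊(n : ℝ) + 1 / 2⌋₊ = n := by
  rw [add_comm, Nat.floor_add_natCast (by norm_num), Nat.floor_eq_zero.mpr (by norm_num), zero_add]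

theorem Nat.ceil_natCast_add_half (n : ℕ) : ⌈(n : ℝ) + 1 / 2⌉₊ = n + 1 := by
  rw [add_comm, Nat.ceil_add_natCast (by norm_num), add_comm,
    (Nat.ceil_eq_iff one_ne_zero).mpr (by norm_num)]

noncomputable def expFloor (a : ℕ → ℝ) (x : ℝ) : ℝ := Real.exp (a ⌊x⌋₊)

noncomputable def expNegCeil (b : ℕ → ℝ) (x : ℝ) : ℝ := Real.exp (-b ⌈x⌉₊)

section

variable {a b : ℕ → ℝ}

theorem expFloor_monotone (ha : Monotone a) : Monotone (expFloor a) :=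
  Real.exp_monotone.comp (ha.comp Nat.floor_mono)

theorem expNegCeil_antitone (hb : Monotone b) : Antitone (expNegCeil b) :=
  Real.exp_monotone.comp_antitone (hb.comp Nat.ceil_mono).neg

theorem expFloor_mul_expNegCeil (x : ℝ) :
    expFloor a x * expNegCeil b x = Real.exp (a ⌊x⌋₊ - b ⌈x⌉₊) := by
  rw [expFloor, expNegCeil, ← Real.exp_add, sub_eq_add_neg]

theorem expFloor_mul_expNegCeil_natCast (n : ℕ) :
    expFloor a n * expNegCeil b n = Real.exp (a n - b n) := by
  rw [expFloor_mul_expNegCeil, Nat.floor_natCast, Nat.ceil_natCast]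

theorem expFloor_mul_expNegCeil_natCast_add_half (n : ℕ) :
    expFloor a (n + 1 / 2) * expNegCeil b (n + 1 / 2) = Real.exp (a n - b (n + 1)) := by
  rw [expFloor_mul_expNegCeil, Nat.floor_natCast_add_half, Nat.ceil_natCast_add_half]

theorem expFloor_mul_expNegCeil_succ (n : ℕ) :
    expFloor a n * expNegCeil b (n + 1) = Real.exp (a n - b (n + 1)) := by
  rw [expFloor, expNegCeil, ← Real.exp_add, sub_eq_add_neg, Nat.floor_natCast,
    ← Nat.cast_add_one, Nat.ceil_natCast]

end

theorem stmt5 :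
    ∃ φ₁ φ₂ : ℝ → ℝ, Monotone φ₁ ∧ Antitone φ₂ ∧ (∀ x, 0 ≤ φ₁ x) ∧ (∀ x, 0 ≤ φ₂ x) ∧
      Tendsto (fun n : ℕ => φ₁ n * φ₂ n) atTop atTop ∧
      liminf (fun x : ℝ => φ₁ x * φ₂ x) atTop = 0 ∧
      liminf (fun n : ℕ => φ₁ n * φ₂ (n + 1)) atTop = 0 := by
  set a : ℕ → ℝ := fun n => (n : ℝ) ^ 2
  set b : ℕ → ℝ := fun n => (n : ℝ) ^ 2 - n
  have ha : Monotone a := fun m n hmn => by simp only [a]; gcongr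
  have hb : Monotone b := monotone_nat_of_le_succ fun n => by simp only [b]; push_cast; nlinarith
  have hab : ∀ n : ℕ, a n - b n = n := fun n => by ring
  have hab_succ : ∀ n : ℕ, a n - b (n + 1) = -n := fun n => by simp only [a, b]; push_cast; ring
  have hexp_neg : Tendsto (fun n : ℕ => Real.exp (-n)) atTop (𝓝 0) :=
    Real.tendsto_exp_neg_atTop_nhds_zero.comp tendsto_natCast_atTop_atTop
  refine ⟨expFloor a, expNegCeil b, expFloor_monotone ha, expNegCeil_antitone hb,
    fun _ => Real.exp_nonneg _, fun _ => Real.exp_nonneg _, ?_, ?_, ?_⟩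
  · simp only [expFloor_mul_expNegCeil_natCast, hab]
    exact Real.tendsto_exp_atTop.comp tendsto_natCast_atTop_atTop
  · refine liminf_eq_zero_of_nonneg_of_tendsto_comp
      (fun _ => mul_nonneg (Real.exp_nonneg _) (Real.exp_nonneg _))
      (tendsto_atTop_add_const_right _ (1 / 2) tendsto_natCast_atTop_atTop) ?_
    simpa only [Function.comp_def, expFloor_mul_expNegCeil_natCast_add_half, hab_succ]
      using hexp_neg
  · simp only [expFloor_mul_expNegCeil_succ, hab_succ]
    exact hexp_neg.liminf_eq
end

section
/- Let ψ ∈ C¹(ℝ, ℝ) satisfy: for all q ∈ (0, ∞), liminf_{x → ∞} [ψ(x) · exp(−q x²)] = ∞, and assume ψ' is non-decreasing. Then for all q ∈ ℝ, liminf_{x → ∞} [ψ'(x) · exp(−q x²)] = ∞. -/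
/-!
Since ψ' is non-decreasing, the mean value inequality gives ψ(x) - ψ(0) ≤ x ψ'(x) for x > 0.
With Q = |q| + 1 this yields
  ψ'(x) e^{-qx²} ≥ (ψ(x) e^{-Qx²} - ψ(0) e^{-Qx²}) · e^{(Q-q)x²} / x,
where the first factor tends to ∞ by hypothesis and the second because Q - q > 0.
-/

open Filter Real Topology

theorem sub_le_mul_sub_of_hasDerivAt_of_monotone {f f' : ℝ → ℝ}
    (hf : ∀ x, HasDerivAt f (f' x) x) (hf' : Monotone f') {a b : ℝ} (hab : a ≤ b) :
    f b - f a ≤ f' b * (b - a) := by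
  have hdiff : Differentiable ℝ f := fun x => (hf x).differentiableAt
  refine (convex_Iic b).image_sub_le_mul_sub_of_deriv_le hdiff.continuous.continuousOn
    hdiff.differentiableOn (fun x hx => ?_) a hab b (le_refl b) hab
  rw [interior_Iic] at hx
  exact (hf x).deriv ▸ hf' (le_of_lt hx)

theorem tendsto_exp_neg_mul_sq_atTop_nhds_zero {c : ℝ} (hc : 0 < c) :
    Tendsto (fun x : ℝ => exp (-c * x ^ 2)) atTop (𝓝 0) := by
  have hsq : Tendsto (fun x : ℝ => c * x ^ 2) atTop atTop :=
    (tendsto_pow_atTop two_ne_zero).const_mul_atTop hc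
  simp only [neg_mul]
  exact tendsto_exp_neg_atTop_nhds_zero.comp hsq

theorem tendsto_exp_mul_sq_div_atTop {c : ℝ} (hc : 0 < c) :
    Tendsto (fun x : ℝ => exp (c * x ^ 2) / x) atTop atTop := by
  refine tendsto_atTop_mono' atTop ?_ (by simpa using tendsto_exp_div_pow_atTop 1)
  filter_upwards [eventually_gt_atTop 0, eventually_ge_atTop c⁻¹] with x hx hcx
  have hcx1 : 1 ≤ c * x := by rwa [inv_le_iff_one_le_mul₀' hc] at hcx
  gcongr
  nlinarith

theorem stmt6_general
    (ψ ψ' : ℝ → ℝ) (hderiv : ∀ x, HasDerivAt ψ (ψ' x) x)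
    (hmono : Monotone ψ')
    (h : ∀ q : ℝ, 0 < q → Tendsto (fun x : ℝ => ψ x * Real.exp (-q * x ^ 2)) atTop atTop) :
    ∀ q : ℝ, Tendsto (fun x : ℝ => ψ' x * Real.exp (-q * x ^ 2)) atTop atTop := by
  intro q
  set Q := |q| + 1
  have hQ : 0 < Q := by positivity
  have hQq : 0 < Q - q := by linarith [le_abs_self q]
  have hlower : Tendsto (fun x => (ψ x * exp (-Q * x ^ 2) + -ψ 0 * exp (-Q * x ^ 2)) *
      (exp ((Q - q) * x ^ 2) / x)) atTop atTop := by
    have hdecay := (tendsto_exp_neg_mul_sq_atTop_nhds_zero hQ).const_mul (-ψ 0)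
    rw [mul_zero] at hdecay
    exact ((h Q hQ).atTop_add hdecay).atTop_mul_atTop₀ (tendsto_exp_mul_sq_div_atTop hQq)
  refine tendsto_atTop_mono' atTop ?_ hlower
  filter_upwards [eventually_gt_atTop 0] with x hx
  have hslope := sub_le_mul_sub_of_hasDerivAt_of_monotone hderiv hmono hx.le
  calc (ψ x * exp (-Q * x ^ 2) + -ψ 0 * exp (-Q * x ^ 2)) * (exp ((Q - q) * x ^ 2) / x)
      = (ψ x - ψ 0) / x * exp (-q * x ^ 2) := by
        rw [← add_mul, mul_div_assoc', mul_assoc, ← exp_add]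
        ring_nf
    _ ≤ ψ' x * exp (-q * x ^ 2) := by
        gcongr
        rw [div_le_iff₀ hx]
        simpa using hslope

theorem stmt6
    (ψ ψ' : ℝ → ℝ) (hderiv : ∀ x, HasDerivAt ψ (ψ' x) x) (hcont : Continuous ψ')
    (hmono : Monotone ψ')
    (h : ∀ q : ℝ, 0 < q → Tendsto (fun x : ℝ => ψ x * Real.exp (-q * x ^ 2)) atTop atTop) :
    ∀ q : ℝ, Tendsto (fun x : ℝ => ψ' x * Real.exp (-q * x ^ 2)) atTop atTop :=
  stmt6_general ψ ψ' hderiv hmono h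
end

section
/- Let η₁, η₂, η₃ ∈ (0, ∞) and let ψ : ℝ → (0, ∞) be strictly increasing and continuous with liminf_{x→∞} ψ(x) = ∞. Then the following are equivalent: (i) for all q ∈ (0, ∞), liminf_{ℕ ∋ n → ∞} [n^q · exp(−η₁ |ψ⁻¹(η₂ n^{η₃})|²)] = ∞; (ii) for all q ∈ (0, ∞), liminf_{ℝ ∋ x → ∞} [ψ(x) · exp(−q x²)] = ∞. -/
/-!
Write `Φ = invFun ψ`. Raising to positive powers and substituting `y = ψ x` turns (ii) into:
`y ^ r * exp (-η₁ * Φ y ^ 2) → ∞` for every `r > 0`, and (i) is the same statement along the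
sequence `y_n = η₂ * n ^ η₃`. Since `exp (-η₁ * Φ y ^ 2)` is eventually decreasing and every large
`y` satisfies `y ≤ y_m ≤ 2 ^ η₃ * y` for `m = ⌈(y / η₂) ^ η₃⁻¹⌉₊`, the sequence controls all `y`.
-/

open Filter Real Set Function

theorem Continuous.Ici_subset_range_of_tendsto_atTop {ψ : ℝ → ℝ} (hcont : Continuous ψ)
    (htop : Tendsto ψ atTop atTop) (a : ℝ) : Ici (ψ a) ⊆ range ψ :=
  (intermediate_value_Ici hcont.continuousOn htop).trans (image_subset_range _ _)

theorem StrictMono.map_atTop_of_continuous {ψ : ℝ → ℝ} (hmono : StrictMono ψ)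
    (hcont : Continuous ψ) (htop : Tendsto ψ atTop atTop) : map ψ atTop = atTop :=
  map_atTop_eq_of_gc_preorder hmono.monotone (ψ 0) fun _ hc => by
    obtain ⟨x, rfl⟩ := hcont.Ici_subset_range_of_tendsto_atTop htop 0 hc
    exact ⟨x, rfl, fun _ => hmono.le_iff_le⟩

theorem StrictMono.monotoneOn_invFun {α β : Type*} [Nonempty α] [LinearOrder α] [Preorder β]
    {f : α → β} (hf : StrictMono f) : MonotoneOn (invFun f) (range f) := by
  rintro _ ⟨x, rfl⟩ _ ⟨y, rfl⟩ hxy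
  simpa only [leftInverse_invFun hf.injective _] using hf.le_iff_le.mp hxy

theorem mul_exp_rpow {u : ℝ} (hu : 0 ≤ u) (v t : ℝ) :
    (u * exp v) ^ t = u ^ t * exp (v * t) := by
  rw [mul_rpow hu (exp_pos v).le, ← exp_mul]

theorem forall_tendsto_mul_exp_neg_iff {α : Type*} {l : Filter α} {u w : α → ℝ}
    (hu : ∀ᶠ x in l, 0 ≤ u x) {c : ℝ} (hc : 0 < c) :
    (∀ q : ℝ, 0 < q → Tendsto (fun x => u x * exp (-q * w x)) l atTop) ↔
      ∀ s : ℝ, 0 < s → Tendsto (fun x => u x ^ s * exp (-c * w x)) l atTop := by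
  constructor
  · intro h s hs
    refine ((tendsto_rpow_atTop hs).comp (h (c / s) (by positivity))).congr' ?_
    filter_upwards [hu] with x hx
    simp only [comp_apply]
    rw [mul_exp_rpow hx]
    congr 2
    field_simp
  · intro h q hq
    refine ((tendsto_rpow_atTop (by positivity : 0 < q / c)).comp
      (h (c / q) (by positivity))).congr' ?_
    filter_upwards [hu] with x hx
    simp only [comp_apply]
    rw [mul_exp_rpow (rpow_nonneg hx _), ← rpow_mul hx, div_mul_div_cancel₀ hq.ne',
      div_self hc.ne', rpow_one]
    congr 2
    field_simp

theorem natCeil_rpow_inv_bounds {a b y : ℝ} (ha : 0 < a) (hb : 0 < b) (hy : a ≤ y) :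
    y ≤ a * (⌈(y / a) ^ b⁻¹⌉₊ : ℝ) ^ b ∧ a / 2 ^ b * (⌈(y / a) ^ b⁻¹⌉₊ : ℝ) ^ b ≤ y := by
  set t := (y / a) ^ b⁻¹
  have ht : t ^ b = y / a := rpow_inv_rpow (div_nonneg (ha.le.trans hy) ha.le) hb.ne'
  have h1 : 1 ≤ t := one_le_rpow ((one_le_div ha).2 hy) (inv_nonneg.2 hb.le)
  constructor
  · calc y = a * t ^ b := by rw [ht]; field_simp
      _ ≤ a * (⌈t⌉₊ : ℝ) ^ b := by gcongr; exact Nat.le_ceil t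
  · calc a / 2 ^ b * (⌈t⌉₊ : ℝ) ^ b ≤ a / 2 ^ b * (2 * t) ^ b := by
          gcongr
          exact Nat.ceil_le_two_mul (by linarith)
      _ = y := by rw [mul_rpow zero_le_two (by linarith), ht]; field_simp

theorem forall_tendsto_natCast_rpow_mul_comp_iff {g : ℝ → ℝ} {a b y₀ : ℝ} (ha : 0 < a)
    (hb : 0 < b) (hg₀ : ∀ y ∈ Ici y₀, 0 ≤ g y) (hg : AntitoneOn g (Ici y₀)) :
    (∀ q : ℝ, 0 < q →
        Tendsto (fun n : ℕ => (n : ℝ) ^ q * g (a * (n : ℝ) ^ b)) atTop atTop) ↔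
      ∀ r : ℝ, 0 < r → Tendsto (fun y => y ^ r * g y) atTop atTop := by
  constructor
  · intro h r hr
    set m : ℝ → ℕ := fun y => ⌈(y / a) ^ b⁻¹⌉₊
    have hm : Tendsto m atTop atTop := tendsto_nat_ceil_atTop.comp
      ((tendsto_rpow_atTop (inv_pos.2 hb)).comp (tendsto_id.atTop_div_const ha))
    refine tendsto_atTop_mono' _ ?_ (((h (b * r) (by positivity)).comp hm).const_mul_atTop
      (by positivity : 0 < (a / 2 ^ b) ^ r))
    filter_upwards [eventually_ge_atTop a, eventually_ge_atTop y₀] with y hya hy₀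
    obtain ⟨hle, hge⟩ := natCeil_rpow_inv_bounds ha hb hya
    have hm₀ : y₀ ≤ a * (m y : ℝ) ^ b := hy₀.trans hle
    calc (a / 2 ^ b) ^ r * ((m y : ℝ) ^ (b * r) * g (a * (m y : ℝ) ^ b))
        = (a / 2 ^ b * (m y : ℝ) ^ b) ^ r * g (a * (m y : ℝ) ^ b) := by
          rw [mul_rpow (by positivity) (by positivity), rpow_mul (Nat.cast_nonneg _)]; ring
      _ ≤ y ^ r * g (a * (m y : ℝ) ^ b) := by
          have := hg₀ _ hm₀
          gcongr
      _ ≤ y ^ r * g y :=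
          mul_le_mul_of_nonneg_left (hg hy₀ hm₀ hle) (rpow_nonneg (ha.le.trans hya) r)
  · intro h q hq
    have hy : Tendsto (fun n : ℕ => a * (n : ℝ) ^ b) atTop atTop :=
      ((tendsto_rpow_atTop hb).comp tendsto_natCast_atTop_atTop).const_mul_atTop ha
    refine (((h (q / b) (by positivity)).comp hy).const_mul_atTop
      (by positivity : 0 < (a ^ (q / b))⁻¹)).congr fun n => ?_
    simp only [comp_apply]
    rw [mul_rpow ha.le (by positivity), ← rpow_mul (Nat.cast_nonneg _), mul_div_cancel₀ _ hb.ne']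
    field_simp

theorem stmt8_general
    (η₁ η₂ η₃ : ℝ) (hη₁ : 0 < η₁) (hη₂ : 0 < η₂) (hη₃ : 0 < η₃)
    (ψ : ℝ → ℝ) (hmono : StrictMono ψ) (hcont : Continuous ψ)
    (htop : Tendsto ψ atTop atTop) :
    (∀ q : ℝ, 0 < q →
        Tendsto
          (fun n : ℕ =>
            (n : ℝ) ^ q *
              Real.exp (-η₁ * (Function.invFun ψ (η₂ * (n : ℝ) ^ η₃)) ^ 2))
          atTop atTop) ↔
      (∀ q : ℝ, 0 < q →
        Tendsto (fun x : ℝ => ψ x * Real.exp (-q * x ^ 2)) atTop atTop) := by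
  have hrange := hcont.Ici_subset_range_of_tendsto_atTop htop 0
  have hanti : AntitoneOn (fun y => exp (-η₁ * invFun ψ y ^ 2)) (Ici (ψ 0)) := by
    intro y hy z hz hyz
    have hy₀ : 0 ≤ invFun ψ y := by
      simpa only [leftInverse_invFun hmono.injective 0] using
        hmono.monotoneOn_invFun (hrange self_mem_Ici) (hrange hy) hy
    have hyz' := hmono.monotoneOn_invFun (hrange hy) (hrange hz) hyz
    exact exp_le_exp.2 <| mul_le_mul_of_nonpos_left (pow_le_pow_left₀ hy₀ hyz' 2) (by linarith)
  calc _ ↔ ∀ r : ℝ, 0 < r → Tendsto (fun y => y ^ r * exp (-η₁ * invFun ψ y ^ 2)) atTop atTop :=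
        forall_tendsto_natCast_rpow_mul_comp_iff hη₂ hη₃ (fun y _ => (exp_pos _).le) hanti
    _ ↔ ∀ r : ℝ, 0 < r → Tendsto (fun x => ψ x ^ r * exp (-η₁ * x ^ 2)) atTop atTop := by
        refine forall₂_congr fun r _ => ?_
        nth_rw 1 [← hmono.map_atTop_of_continuous hcont htop]
        rw [tendsto_map'_iff]
        simp only [comp_def, leftInverse_invFun hmono.injective _]
    _ ↔ _ := (forall_tendsto_mul_exp_neg_iff (htop.eventually_ge_atTop 0) hη₁).symm

theorem stmt8
    (η₁ η₂ η₃ : ℝ) (hη₁ : 0 < η₁) (hη₂ : 0 < η₂) (hη₃ : 0 < η₃)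
    (ψ : ℝ → ℝ) (hpos : ∀ x, 0 < ψ x) (hmono : StrictMono ψ) (hcont : Continuous ψ)
    (htop : Tendsto ψ atTop atTop) :
    (∀ q : ℝ, 0 < q →
        Tendsto
          (fun n : ℕ =>
            (n : ℝ) ^ q *
              Real.exp (-η₁ * (Function.invFun ψ (η₂ * (n : ℝ) ^ η₃)) ^ 2))
          atTop atTop) ↔
      (∀ q : ℝ, 0 < q →
        Tendsto (fun x : ℝ => ψ x * Real.exp (-q * x ^ 2)) atTop atTop) :=
  stmt8_general η₁ η₂ η₃ hη₁ hη₂ hη₃ ψ hmono hcont htop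
end
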